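/- Let S be a finite nonempty type. Let P, Q, and P̂ be row-stochastic S × S real matrices (all entries nonnegative and each row summing to 1), let μ be a stationary distribution of P and ν a stationary distribution of Q, and let δ : S → ℝ be nonnegative with ∑_{s'} |P(s,s') − P̂(s,s')| ≤ δ(s) and ∑_{s'} |Q(s,s') − P̂(s,s')| ≤ δ(s) for every s. Let C ≥ 1 and 0 < ρ < 1 be reals such that for every probability vector λ on S and every integer t ≥ 1, ∑_s |(λPᵗ)(s) − μ(s)| ≤ C·ρᵗ, and set n̂ := ⌈log C / log(1/ρ)⌉ and β := 2·(n̂ + C·ρ^{n̂}/(1 − ρ)) · max_s δ(s). If f : S → ℝ satisfies 0 ≤ f(s) ≤ 1 for all s and ∑_s ν(s)·f(s) ≥ η for some real η, then ∑_s μ(s)·f(s) ≥ η − β. -/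

import Mathlib

/-!
Put `w = ν - νP = ν(Q - P)`: it has total mass zero and `‖w‖₁ ≤ 2 max δ`, since the rows of
`P` and `Q` are both `δ`-close to those of `P̂`. Telescoping, `ν - νPᵀ = ∑_{i<T} wPⁱ`, and
`νPᵀ → μ` by the mixing hypothesis, so `‖ν - μ‖₁ ≤ ∑ᵢ ‖wPⁱ‖₁`. A stochastic matrix is an `ℓ¹`
contraction, which bounds the first `n̂` terms by `‖w‖₁`; and a mass-zero vector `x` equals
`(‖x‖₁ / 2) (l₁ - l₂)` for probability vectors `l₁, l₂`, so mixing bounds the remaining terms by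
`‖w‖₁ C ρⁱ`. Finally `E_ν f - E_μ f ≤ ‖ν - μ‖₁` when `0 ≤ f ≤ 1`.
-/

open Finset Matrix

section

variable {m S : Type*} [Fintype m] [Fintype S]

theorem sum_abs_vecMul_le (x : m → ℝ) (A : Matrix m S ℝ) :
    ∑ j, |vecMul x A j| ≤ ∑ i, |x i| * ∑ j, |A i j| :=
  calc ∑ j, |vecMul x A j| ≤ ∑ j, ∑ i, |x i| * |A i j| :=
        sum_le_sum fun j _ => (abs_sum_le_sum_abs _ _).trans_eq (by simp only [abs_mul])
    _ = ∑ i, |x i| * ∑ j, |A i j| := by rw [sum_comm]; simp only [mul_sum]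

theorem sum_abs_vecMul_le_of_mem_rowStochastic [DecidableEq S] {P : Matrix S S ℝ}
    (hP : P ∈ rowStochastic ℝ S) (x : S → ℝ) : ∑ j, |vecMul x P j| ≤ ∑ i, |x i| := by
  refine (sum_abs_vecMul_le x P).trans_eq (sum_congr rfl fun i _ => ?_)
  simp only [abs_of_nonneg (nonneg_of_mem_rowStochastic hP), sum_row_of_mem_rowStochastic hP,
    mul_one]

theorem sum_abs_vecMul_sub_le_of_mem_stdSimplex {M : Matrix S S ℝ} {μ : S → ℝ} {B : ℝ}
    (hM : ∀ l ∈ stdSimplex ℝ S, ∑ s, |vecMul l M s - μ s| ≤ B) {l₁ l₂ : S → ℝ}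
    (h₁ : l₁ ∈ stdSimplex ℝ S) (h₂ : l₂ ∈ stdSimplex ℝ S) :
    ∑ s, |vecMul (l₁ - l₂) M s| ≤ 2 * B :=
  calc ∑ s, |vecMul (l₁ - l₂) M s|
      ≤ ∑ s, (|vecMul l₁ M s - μ s| + |vecMul l₂ M s - μ s|) := by
        refine sum_le_sum fun s _ => ?_
        rw [sub_vecMul, Pi.sub_apply, ← sub_sub_sub_cancel_right _ _ (μ s)]
        exact abs_sub _ _
    _ ≤ 2 * B := by rw [sum_add_distrib]; linarith [hM l₁ h₁, hM l₂ h₂]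

theorem sum_abs_vecMul_le_of_sum_eq_zero {M : Matrix S S ℝ} {μ : S → ℝ} {B : ℝ}
    (hM : ∀ l ∈ stdSimplex ℝ S, ∑ s, |vecMul l M s - μ s| ≤ B) {x : S → ℝ}
    (hx : ∑ s, x s = 0) : ∑ s, |vecMul x M s| ≤ (∑ s, |x s|) * B := by
  set a := ∑ s, (x s)⁺
  have hneg : ∑ s, (x s)⁻ = a := by
    have : a - ∑ s, (x s)⁻ = ∑ s, x s := by
      rw [← sum_sub_distrib]; simp only [posPart_sub_negPart]
    linarith
  have habs : ∑ s, |x s| = 2 * a := by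
    simp only [← posPart_add_negPart, sum_add_distrib, hneg]; ring
  have ha0 : 0 ≤ a := sum_nonneg fun s _ => posPart_nonneg (x s)
  rcases ha0.eq_or_lt with ha | ha
  · have hx0 : x = 0 := funext fun s => by
      rw [← posPart_sub_negPart (x s),
        (sum_eq_zero_iff_of_nonneg fun s _ => posPart_nonneg (x s)).1 ha.symm s (mem_univ s),
        (sum_eq_zero_iff_of_nonneg fun s _ => negPart_nonneg (x s)).1 (hneg.trans ha.symm) s
          (mem_univ s), sub_zero, Pi.zero_apply]
    simp [hx0]
  · have hsimplex : ∀ y : S → ℝ, (∀ s, 0 ≤ y s) → ∑ s, y s = a → a⁻¹ • y ∈ stdSimplex ℝ S :=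
      fun y hy hya => ⟨fun s => smul_nonneg (inv_nonneg.2 ha.le) (hy s),
        by simp only [Pi.smul_apply, smul_eq_mul, ← mul_sum, hya, inv_mul_cancel₀ ha.ne']⟩
    set l₁ := a⁻¹ • fun s => (x s)⁺
    set l₂ := a⁻¹ • fun s => (x s)⁻
    have hdecomp : x = a • (l₁ - l₂) := by
      rw [← smul_sub, smul_smul, mul_inv_cancel₀ ha.ne', one_smul]
      exact funext fun s => (posPart_sub_negPart (x s)).symm
    have hl : ∑ s, |vecMul (l₁ - l₂) M s| ≤ 2 * B := sum_abs_vecMul_sub_le_of_mem_stdSimplex hM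
      (hsimplex _ (fun s => posPart_nonneg _) rfl) (hsimplex _ (fun s => negPart_nonneg _) hneg)
    rw [habs, hdecomp, smul_vecMul]
    simp only [Pi.smul_apply, smul_eq_mul, abs_mul, abs_of_pos ha, ← mul_sum]
    linarith [mul_le_mul_of_nonneg_left hl ha.le]

theorem sub_vecMul_pow_eq_sum_range [DecidableEq S] (ν : S → ℝ) (P : Matrix S S ℝ) (T : ℕ) :
    ν - vecMul ν (P ^ T) = ∑ i ∈ range T, vecMul (ν - vecMul ν P) (P ^ i) := by
  simp only [sub_vecMul, vecMul_vecMul, ← pow_succ']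
  rw [sum_range_sub', pow_zero, vecMul_one]

theorem sum_range_le_of_le_of_le_geom {b : ℕ → ℝ} {ε K ρ : ℝ} {N T : ℕ} (hNT : N ≤ T)
    (hb : ∀ i, b i ≤ ε) (hgeom : ∀ i, b i ≤ K * ρ ^ i) (hK : 0 ≤ K) (hρ0 : 0 ≤ ρ)
    (hρ1 : ρ < 1) : ∑ i ∈ range T, b i ≤ N * ε + K * ρ ^ N / (1 - ρ) := by
  rw [← sum_range_add_sum_Ico _ hNT, mul_div_assoc]
  gcongr
  · exact (sum_le_sum fun i _ => hb i).trans_eq (by simp)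
  · calc ∑ i ∈ Ico N T, b i ≤ K * ∑ i ∈ Ico N T, ρ ^ i := by
          rw [mul_sum]; exact sum_le_sum fun i _ => hgeom i
      _ ≤ K * (ρ ^ N / (1 - ρ)) := by gcongr; exact geom_sum_Ico_le_of_lt_one hρ0 hρ1

theorem sum_abs_sub_le_of_mixing [DecidableEq S] {P : Matrix S S ℝ}
    (hP : P ∈ rowStochastic ℝ S) {μ : S → ℝ} {C ρ : ℝ} (hC : 1 ≤ C) (hρ0 : 0 ≤ ρ) (hρ1 : ρ < 1)
    (hmix : ∀ l ∈ stdSimplex ℝ S, ∀ t : ℕ, 1 ≤ t → ∑ s, |vecMul l (P ^ t) s - μ s| ≤ C * ρ ^ t)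
    {ν : S → ℝ} (hν : ν ∈ stdSimplex ℝ S) (N : ℕ) :
    ∑ s, |ν s - μ s| ≤ (N + C * ρ ^ N / (1 - ρ)) * ∑ s, |ν s - vecMul ν P s| := by
  set w := ν - vecMul ν P
  set ε := ∑ s, |w s|
  have hε : 0 ≤ ε := sum_nonneg fun s _ => abs_nonneg _
  have hνP : ∑ s, vecMul ν P s = 1 := by
    simpa only [dotProduct_one] using
      vecMul_dotProduct_one_eq_one_rowStochastic hP (by simpa only [dotProduct_one] using hν.2)
  have hw : ∑ s, w s = 0 := by simp only [w, Pi.sub_apply, sum_sub_distrib, hνP, hν.2, sub_self]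
  have hcontract : ∀ i, ∑ s, |vecMul w (P ^ i) s| ≤ ε := fun i =>
    sum_abs_vecMul_le_of_mem_rowStochastic (pow_mem hP i) w
  have hgeom : ∀ i, ∑ s, |vecMul w (P ^ i) s| ≤ ε * C * ρ ^ i := by
    intro i
    rcases i.eq_zero_or_pos with rfl | hi
    · simpa using (hcontract 0).trans (le_mul_of_one_le_right hε hC)
    · rw [mul_assoc]
      exact sum_abs_vecMul_le_of_sum_eq_zero (fun l hl => hmix l hl i hi) hw
  have hbound : ∀ T, N ≤ T → 1 ≤ T →
      ∑ s, |ν s - μ s| ≤ N * ε + ε * C * ρ ^ N / (1 - ρ) + C * ρ ^ T := by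
    intro T hNT hT
    calc ∑ s, |ν s - μ s|
        ≤ ∑ s, (|(ν - vecMul ν (P ^ T)) s| + |vecMul ν (P ^ T) s - μ s|) :=
          sum_le_sum fun s _ => abs_sub_le _ _ _
      _ ≤ ∑ i ∈ range T, ∑ s, |vecMul w (P ^ i) s| + C * ρ ^ T := by
          rw [sum_add_distrib, sub_vecMul_pow_eq_sum_range]
          gcongr
          · refine (sum_le_sum fun s _ => ?_).trans_eq sum_comm
            rw [Finset.sum_apply]
            exact abs_sum_le_sum_abs _ _
          · exact hmix ν hν T hT
      _ ≤ _ := by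
          gcongr
          exact sum_range_le_of_le_of_le_geom hNT hcontract hgeom (by positivity) hρ0 hρ1
  have hlim : Filter.Tendsto (fun T : ℕ => N * ε + ε * C * ρ ^ N / (1 - ρ) + C * ρ ^ T)
      Filter.atTop (nhds (N * ε + ε * C * ρ ^ N / (1 - ρ))) := by
    simpa using (tendsto_pow_atTop_nhds_zero_of_lt_one hρ0 hρ1).const_mul C |>.const_add
      (N * ε + ε * C * ρ ^ N / (1 - ρ))
  calc ∑ s, |ν s - μ s| ≤ N * ε + ε * C * ρ ^ N / (1 - ρ) :=
        ge_of_tendsto hlim <| Filter.eventually_atTop.2 ⟨max N 1, fun T hT =>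
          hbound T (le_of_max_le_left hT) (le_of_max_le_right hT)⟩
    _ = _ := by simp only [ε, w, Pi.sub_apply]; ring

theorem sum_abs_sub_vecMul_le_of_rows_near {P Q P' : Matrix S S ℝ}
    {ν : S → ℝ} (hν : ν ∈ stdSimplex ℝ S) (hνQ : vecMul ν Q = ν) {ε : ℝ}
    (hP : ∀ s, ∑ s', |P s s' - P' s s'| ≤ ε) (hQ : ∀ s, ∑ s', |Q s s' - P' s s'| ≤ ε) :
    ∑ s, |ν s - vecMul ν P s| ≤ 2 * ε := by
  have hrow : ∀ s, ∑ s', |(Q - P) s s'| ≤ 2 * ε := fun s =>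
    calc ∑ s', |(Q - P) s s'| ≤ ∑ s', (|Q s s' - P' s s'| + |P s s' - P' s s'|) :=
          sum_le_sum fun s' _ => by
            rw [Matrix.sub_apply, ← sub_sub_sub_cancel_right _ _ (P' s s')]
            exact abs_sub _ _
      _ ≤ 2 * ε := by rw [sum_add_distrib]; linarith [hP s, hQ s]
  calc ∑ s, |ν s - vecMul ν P s| = ∑ s', |vecMul ν (Q - P) s'| := by
        rw [vecMul_sub, hνQ]; rfl
    _ ≤ ∑ s, |ν s| * ∑ s', |(Q - P) s s'| := sum_abs_vecMul_le ν (Q - P)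
    _ ≤ ∑ s, ν s * (2 * ε) :=
        sum_le_sum fun s _ => by
          rw [abs_of_nonneg (hν.1 s)]; exact mul_le_mul_of_nonneg_left (hrow s) (hν.1 s)
    _ = 2 * ε := by rw [← sum_mul, hν.2, one_mul]

theorem sum_mul_sub_sum_mul_le_sum_abs_sub {ν μ f : S → ℝ} (hf : ∀ s, |f s| ≤ 1) :
    ∑ s, ν s * f s - ∑ s, μ s * f s ≤ ∑ s, |ν s - μ s| := by
  rw [← sum_sub_distrib]
  refine (le_abs_self _).trans <| (abs_sum_le_sum_abs _ _).trans <| sum_le_sum fun s _ => ?_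
  rw [← sub_mul, abs_mul]
  exact mul_le_of_le_one_right (abs_nonneg _) (hf s)

end

theorem stmt10_general {S : Type*} [Fintype S] [DecidableEq S] [Nonempty S]
    (P Q Phat : Matrix S S ℝ) (μ ν : S → ℝ) (δ : S → ℝ) (C ρ η : ℝ)
    (hP0 : ∀ s s', 0 ≤ P s s') (hP1 : ∀ s, ∑ s', P s s' = 1)
    (hν0 : ∀ s, 0 ≤ ν s) (hν1 : ∑ s, ν s = 1) (hνQ : Matrix.vecMul ν Q = ν)
    (hPδ : ∀ s, ∑ s', |P s s' - Phat s s'| ≤ δ s)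
    (hQδ : ∀ s, ∑ s', |Q s s' - Phat s s'| ≤ δ s)
    (hC : 1 ≤ C) (hρ0 : 0 < ρ) (hρ1 : ρ < 1)
    (hmix : ∀ l : S → ℝ, (∀ s, 0 ≤ l s) → ∑ s, l s = 1 →
      ∀ t : ℕ, 1 ≤ t → ∑ s, |Matrix.vecMul l (P ^ t) s - μ s| ≤ C * ρ ^ t) :
    ∀ f : S → ℝ, (∀ s, 0 ≤ f s ∧ f s ≤ 1) →
      η ≤ ∑ s, ν s * f s →
      η - 2 * ((⌈Real.log C / Real.log (1 / ρ)⌉ : ℝ)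
            + C * ρ ^ (⌈Real.log C / Real.log (1 / ρ)⌉ : ℤ) / (1 - ρ))
          * Finset.univ.sup' Finset.univ_nonempty δ
        ≤ ∑ s, μ s * f s := by
  intro f hf hη
  have hexp_nonneg : 0 ≤ Real.log C / Real.log (1 / ρ) :=
    div_nonneg (Real.log_nonneg hC) (Real.log_pos ((one_lt_div hρ0).2 hρ1)).le
  rw [← Int.natCast_ceil_eq_ceil hexp_nonneg, Int.cast_natCast, zpow_natCast]
  set N := ⌈Real.log C / Real.log (1 / ρ)⌉₊
  have hdist := sum_abs_sub_le_of_mixing (mem_rowStochastic_iff_sum.2 ⟨hP0, hP1⟩) hC hρ0.le hρ1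
    (fun l hl => hmix l hl.1 hl.2) ⟨hν0, hν1⟩ N
  have hδ : ∀ s, δ s ≤ univ.sup' univ_nonempty δ := fun s => le_sup' δ (mem_univ s)
  have hpert := sum_abs_sub_vecMul_le_of_rows_near ⟨hν0, hν1⟩ hνQ
    (fun s => (hPδ s).trans (hδ s)) (fun s => (hQδ s).trans (hδ s))
  have hf_abs : ∀ s, |f s| ≤ 1 := fun s => abs_le.2 ⟨by linarith [(hf s).1], (hf s).2⟩
  have hcoef : 0 ≤ (N : ℝ) + C * ρ ^ N / (1 - ρ) :=
    add_nonneg N.cast_nonneg (div_nonneg (by positivity) (sub_pos.2 hρ1).le)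
  linarith [sum_mul_sub_sum_mul_le_sum_abs_sub (ν := ν) (μ := μ) hf_abs,
    mul_le_mul_of_nonneg_left hpert hcoef]

/-- Lemma 7 (consbound) in finite-matrix form: with `P, Q` within ℓ₁ radius `δ s` of the
estimate `P̂` on each row, `μ, ν` their stationary distributions, geometric ergodicity of
`P` with constants `C ≥ 1`, `0 < ρ < 1`, `n̂ = ⌈log C / log(1/ρ)⌉` and
`β = 2 (n̂ + C ρ^n̂ / (1−ρ)) max_s δ s`: if `E_ν f ≥ η` for `f : S → [0,1]`,
then `E_μ f ≥ η − β`. -/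
theorem stmt10 {S : Type*} [Fintype S] [DecidableEq S] [Nonempty S]
    (P Q Phat : Matrix S S ℝ) (μ ν : S → ℝ) (δ : S → ℝ) (C ρ η : ℝ)
    (hP0 : ∀ s s', 0 ≤ P s s') (hP1 : ∀ s, ∑ s', P s s' = 1)
    (hQ0 : ∀ s s', 0 ≤ Q s s') (hQ1 : ∀ s, ∑ s', Q s s' = 1)
    (hPhat0 : ∀ s s', 0 ≤ Phat s s') (hPhat1 : ∀ s, ∑ s', Phat s s' = 1)
    (hμ0 : ∀ s, 0 ≤ μ s) (hμ1 : ∑ s, μ s = 1) (hμP : Matrix.vecMul μ P = μ)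
    (hν0 : ∀ s, 0 ≤ ν s) (hν1 : ∑ s, ν s = 1) (hνQ : Matrix.vecMul ν Q = ν)
    (hδ0 : ∀ s, 0 ≤ δ s)
    (hPδ : ∀ s, ∑ s', |P s s' - Phat s s'| ≤ δ s)
    (hQδ : ∀ s, ∑ s', |Q s s' - Phat s s'| ≤ δ s)
    (hC : 1 ≤ C) (hρ0 : 0 < ρ) (hρ1 : ρ < 1)
    (hmix : ∀ l : S → ℝ, (∀ s, 0 ≤ l s) → ∑ s, l s = 1 →
      ∀ t : ℕ, 1 ≤ t → ∑ s, |Matrix.vecMul l (P ^ t) s - μ s| ≤ C * ρ ^ t) :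
    ∀ f : S → ℝ, (∀ s, 0 ≤ f s ∧ f s ≤ 1) →
      η ≤ ∑ s, ν s * f s →
      η - 2 * ((⌈Real.log C / Real.log (1 / ρ)⌉ : ℝ)
            + C * ρ ^ (⌈Real.log C / Real.log (1 / ρ)⌉ : ℤ) / (1 - ρ))
          * Finset.univ.sup' Finset.univ_nonempty δ
        ≤ ∑ s, μ s * f s :=
  stmt10_general P Q Phat μ ν δ C ρ η hP0 hP1 hν0 hν1 hνQ hPδ hQδ hC hρ0 hρ1 hmix
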